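/- Let S be a pomonoid. Any retract of a weakly po-flat right S-poset is weakly po-flat. That is, if A is weakly po-flat and there are S-poset morphisms g : B → A and f : A → B with f ∘ g = id_B, then B is weakly po-flat. -/
import Mathlib


/-- An `S`-tossing witnessing `a ⊗ b ≤ a' ⊗ b'` in `A ⊗_S B`, where `B ⊆ S` is
a left `S`-subposet of `S`: there are `c₁,…,cₙ ∈ A`, `sᵢ, tᵢ ∈ S` and
`u₀ = b, u₁, …, uₙ = b' ∈ B` with
`a ≤ c₁s₁`, `cᵢtᵢ ≤ c_{i+1}s_{i+1}`, `cₙtₙ ≤ a'` and `sᵢu_{i-1} ≤ tᵢuᵢ`. -/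
def TossLe {S A : Type} [Monoid S] [PartialOrder S] [PartialOrder A]
    (act : A → S → A) (B : Set S) (a : A) (b : S) (a' : A) (b' : S) : Prop :=
  ∃ n : ℕ, ∃ c : Fin (n + 1) → A, ∃ s t : Fin (n + 1) → S, ∃ u : Fin (n + 2) → S,
    u 0 = b ∧ u (Fin.last (n + 1)) = b' ∧ (∀ i, u i ∈ B) ∧
    a ≤ act (c 0) (s 0) ∧
    (∀ i : Fin n, act (c i.castSucc) (t i.castSucc) ≤ act (c i.succ) (s i.succ)) ∧
    act (c (Fin.last n)) (t (Fin.last n)) ≤ a' ∧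
    (∀ i : Fin (n + 1), s i * u i.castSucc ≤ t i * u i.succ)

/-- A right `S`-poset (given by raw data) is weakly po-flat: `bs ≤ b't`
implies `b ⊗ s ≤ b' ⊗ t` in `B ⊗_S (Ss ∪ St)`. -/
def WeaklyPoFlat {S A : Type} [Monoid S] [PartialOrder S] [PartialOrder A]
    (act : A → S → A) : Prop :=
  ∀ (b b' : A) (s t : S), act b s ≤ act b' t →
    TossLe act ({r : S | ∃ w : S, r = w * s} ∪ {r : S | ∃ w : S, r = w * t}) b s b' t

/-- any retract of a weakly po-flat right `S`-poset is weakly po-flat. -/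
theorem retract_of_weakly_po_flat
    {S A B : Type} [Monoid S] [PartialOrder S] [PartialOrder A] [PartialOrder B]
    [CovariantClass S S (· * ·) (· ≤ ·)]
    [CovariantClass S S (Function.swap (· * ·)) (· ≤ ·)]
    (actA : A → S → A)
    (actA_mul : ∀ (a : A) (s t : S), actA (actA a s) t = actA a (s * t))
    (actA_one : ∀ a : A, actA a 1 = a)
    (actA_monoA : ∀ (s : S) {a b : A}, a ≤ b → actA a s ≤ actA b s)
    (actA_monoS : ∀ (a : A) {s t : S}, s ≤ t → actA a s ≤ actA a t)
    (actB : B → S → B)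
    (actB_mul : ∀ (a : B) (s t : S), actB (actB a s) t = actB a (s * t))
    (actB_one : ∀ a : B, actB a 1 = a)
    (actB_monoA : ∀ (s : S) {a b : B}, a ≤ b → actB a s ≤ actB b s)
    (actB_monoS : ∀ (a : B) {s t : S}, s ≤ t → actB a s ≤ actB a t)
    (g : B → A) (f : A → B)
    (g_mono : ∀ {a b : B}, a ≤ b → g a ≤ g b)
    (g_act : ∀ (a : B) (s : S), g (actB a s) = actA (g a) s)
    (f_mono : ∀ {a b : A}, a ≤ b → f a ≤ f b)
    (f_act : ∀ (a : A) (s : S), f (actA a s) = actB (f a) s)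
    (hfg : ∀ b : B, f (g b) = b)
    (hA : WeaklyPoFlat actA) :
    WeaklyPoFlat actB := by
  intro b b' s t h
  have hA' : actA (g b) s ≤ actA (g b') t := by
    rw [← g_act, ← g_act]; exact g_mono h
  obtain ⟨n, c, s', t', u, hu0, hul, huB, h0, hmid, hlast, hst⟩ := hA (g b) (g b') s t hA'
  refine ⟨n, fun i => f (c i), s', t', u, hu0, hul, huB, ?_, ?_, ?_, hst⟩
  · have := f_mono h0
    rwa [hfg, f_act] at this
  · intro i
    have := f_mono (hmid i)
    rwa [f_act, f_act] at this
  · have := f_mono hlast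
    rwa [hfg, f_act] at this
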